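/- arXiv:2001.11460 — 2 statements merged into one kernel-verified Lean document; each statement's English description precedes it below -/
import Mathlib

section
/- Let Ω be a bounded strictly convex domain in ℝⁿ with smooth boundary and E ⊂ ∂Ω open and nonempty. Then Ω can be scanned from E: any continuous function φ on Ω̄ whose integral vanishes over every line segment in Ω̄ meeting E is identically zero. -/
open Set intervalIntegral

/-- A continuous function on `[0, L]` all of whose partial integrals vanish is zero. -/
lemma zero_of_partial_integrals {g : ℝ → ℝ} {L : ℝ} (hL : 0 < L)
    (hg : ContinuousOn g (Icc 0 L))
    (h : ∀ r ∈ Icc (0:ℝ) L, (∫ t in (0:ℝ)..r, g t) = 0) :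
    ∀ r ∈ Icc (0:ℝ) L, g r = 0 := by
  intro r hr
  haveI : Fact (r ∈ Icc (0:ℝ) L) := ⟨hr⟩
  have hint : IntervalIntegrable g MeasureTheory.volume 0 r := by
    apply (hg.mono _).intervalIntegrable
    rw [uIcc_of_le hr.1]
    exact Icc_subset_Icc le_rfl hr.2
  have hmeas : StronglyMeasurableAtFilter g (nhdsWithin r (Icc 0 L)) MeasureTheory.volume :=
    hg.stronglyMeasurableAtFilter_nhdsWithin measurableSet_Icc r
  have hcont : ContinuousWithinAt g (Icc 0 L) r := hg r hr
  have hd1 : HasDerivWithinAt (fun u => ∫ t in (0:ℝ)..u, g t) (g r) (Icc 0 L) r :=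
    intervalIntegral.integral_hasDerivWithinAt_right hint hmeas hcont
  have hd2 : HasDerivWithinAt (fun u => ∫ t in (0:ℝ)..u, g t) 0 (Icc 0 L) r := by
    have hev : (fun u => ∫ t in (0:ℝ)..u, g t) =ᶠ[nhdsWithin r (Icc 0 L)] (fun _ => 0) :=
      Filter.eventuallyEq_of_mem self_mem_nhdsWithin (fun x hx => h x hx)
    exact (hasDerivWithinAt_const r (Icc (0:ℝ) L) (0:ℝ)).congr_of_eventuallyEq hev (h r hr)
  have hu : UniqueDiffWithinAt ℝ (Icc (0:ℝ) L) r := uniqueDiffOn_Icc hL r hr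
  rw [← hd1.derivWithin hu, hd2.derivWithin hu]

/-- A bounded strictly convex domain can be scanned from any nonempty relatively
open subset E of its boundary: a continuous function on Ω̄ whose integral vanishes
over every line segment in Ω̄ meeting E is identically zero. -/
theorem strictly_convex_scannable {n : ℕ} (hn : 2 ≤ n)
    (Ω : Set (EuclideanSpace ℝ (Fin n))) (hΩo : IsOpen Ω)
    (hΩb : Bornology.IsBounded Ω) (hΩc : StrictConvex ℝ Ω) (hΩne : Ω.Nonempty)
    (E : Set (EuclideanSpace ℝ (Fin n))) (hEne : E.Nonempty)
    (hEopen : ∃ U : Set (EuclideanSpace ℝ (Fin n)), IsOpen U ∧ E = frontier Ω ∩ U)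
    (φ : EuclideanSpace ℝ (Fin n) → ℝ) (hφ : ContinuousOn φ (closure Ω))
    (hvanish : ∀ a b : EuclideanSpace ℝ (Fin n), segment ℝ a b ⊆ closure Ω →
      (segment ℝ a b ∩ E).Nonempty →
      (∫ t in (0:ℝ)..‖b - a‖, φ (a + t • (‖b - a‖⁻¹ • (b - a)))) = 0) :
    ∀ z ∈ closure Ω, φ z = 0 := by
  obtain ⟨a, haE⟩ := hEne
  obtain ⟨U, hU, hEU⟩ := hEopen
  have haF : a ∈ frontier Ω := (hEU ▸ haE).1
  have haC : a ∈ closure Ω := frontier_subset_closure haF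
  have hconv : Convex ℝ (closure Ω) := hΩc.convex.closure
  -- key claim: φ vanishes on every ray segment from a inside closure Ω
  have key : ∀ z ∈ closure Ω, z ≠ a →
      ∀ r ∈ Icc (0:ℝ) ‖z - a‖, φ (a + r • (‖z - a‖⁻¹ • (z - a))) = 0 := by
    intro z hz hza
    set L : ℝ := ‖z - a‖ with hLdef
    have hL : 0 < L := by
      simpa [hLdef, norm_pos_iff, sub_eq_zero] using hza
    set ω : EuclideanSpace ℝ (Fin n) := L⁻¹ • (z - a) with hω
    have hωnorm : ‖ω‖ = 1 := by
      rw [hω, norm_smul, norm_inv, Real.norm_eq_abs, abs_of_pos hL, ← hLdef,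
        inv_mul_cancel₀ hL.ne']
    -- points on the segment
    have hmem : ∀ r ∈ Icc (0:ℝ) L, a + r • ω ∈ closure Ω := by
      intro r hr
      have heq : a + r • ω = (1 - r / L) • a + (r / L) • z := by
        rw [hω, smul_smul, ← div_eq_mul_inv]
        module
      rw [heq]
      exact hconv haC hz (sub_nonneg.2 (div_le_one_of_le₀ hr.2 hL.le))
        (div_nonneg hr.1 hL.le) (by ring)
    set g : ℝ → ℝ := fun t => φ (a + t • ω) with hg
    have hgc : ContinuousOn g (Icc 0 L) := by
      apply hφ.comp (Continuous.continuousOn (by continuity)) hmem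
    have hzero : ∀ r ∈ Icc (0:ℝ) L, (∫ t in (0:ℝ)..r, g t) = 0 := by
      intro r hr
      rcases eq_or_lt_of_le hr.1 with h0 | h0
      · simp [← h0]
      · set b := a + r • ω with hb
        have hbC : b ∈ closure Ω := hmem r hr
        have hba : b - a = r • ω := by rw [hb]; abel
        have hnorm : ‖b - a‖ = r := by
          rw [hba, norm_smul, hωnorm, Real.norm_eq_abs, abs_of_pos h0, mul_one]
        have hseg : segment ℝ a b ⊆ closure Ω := hconv.segment_subset haC hbC
        have hne : (segment ℝ a b ∩ E).Nonempty :=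
          ⟨a, left_mem_segment ℝ a b, haE⟩
        have := hvanish a b hseg hne
        rw [hnorm, hba] at this
        rw [show (r:ℝ)⁻¹ • r • ω = ω by rw [smul_smul, inv_mul_cancel₀ h0.ne', one_smul]]
          at this
        exact this
    exact zero_of_partial_integrals hL hgc hzero
  -- now conclude
  intro z hz
  by_cases hza : z = a
  · -- use a point of Ω, which differs from a
    obtain ⟨w, hw⟩ := hΩne
    have hwC : w ∈ closure Ω := subset_closure hw
    have hwa : w ≠ a := by
      rintro rfl
      exact haF.2 (by rwa [hΩo.interior_eq])
    have := key w hwC hwa 0 (left_mem_Icc.2 (norm_nonneg _))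
    simpa [hza] using this
  · have hL : 0 < ‖z - a‖ := by simpa [norm_pos_iff, sub_eq_zero] using hza
    have := key z hz hza ‖z - a‖ (right_mem_Icc.2 (norm_nonneg _))
    rwa [smul_smul, mul_inv_cancel₀ hL.ne', one_smul, add_sub_cancel] at this
end

section
/- Let σ : Ω̄ → ℝ be continuous with 0 < c ≤ σ ≤ M on a bounded domain Ω with chord lengths bounded by D. Define, for bounded measurable u on Ω × Sⁿ⁻¹, (Ku)(x,θ) = ∫₀^{τ(x,θ)} α(x, x−tθ) σ(x−tθ) ⟨u⟩(x−tθ) dt, where ⟨u⟩(y) = (1/|Sⁿ⁻¹|)∫_{Sⁿ⁻¹} u(y,ω) dω and τ(x,θ) = ‖x − x_{θ−}‖. Then ‖Ku‖_∞ ≤ (1 − e^{−MD}) ‖u‖_∞, so K is a contraction on L^∞(Ω × Sⁿ⁻¹). -/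
/-!
Along the ray `t ↦ x - t • θ` the kernel `α σ = exp (-∫₀ᵗ σ) σ(t)` is nonnegative and is the
derivative of `-exp (-∫₀ᵗ σ)`, so its total mass is `1 - exp (-∫₀^τ σ) ≤ 1 - exp (-M D)`.
Since averaging over directions does not increase the sup norm, `|Ku|` is at most that mass
times `‖u‖_∞`.
-/

open MeasureTheory Set Real

theorem norm_average_le_of_norm_le {α E : Type*} [MeasurableSpace α] [NormedAddCommGroup E]
    [NormedSpace ℝ E] {μ : Measure α} {f : α → E} {C : ℝ} (hC : 0 ≤ C)
    (h : ∀ᵐ x ∂μ, ‖f x‖ ≤ C) : ‖⨍ x, f x ∂μ‖ ≤ C := by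
  have hν : ((μ univ)⁻¹ • μ) univ ≤ 1 := ENNReal.inv_mul_le_one _
  have : IsFiniteMeasure ((μ univ)⁻¹ • μ) := ⟨hν.trans_lt ENNReal.one_lt_top⟩
  calc ‖⨍ x, f x ∂μ‖ ≤ C * ((μ univ)⁻¹ • μ).real univ :=
        norm_integral_le_of_norm_le_const (Measure.ae_smul_measure h _)
    _ ≤ C * 1 := by
        gcongr
        exact ENNReal.toReal_le_of_le_ofReal zero_le_one (by rwa [ENNReal.ofReal_one])
    _ = C := mul_one C

section Attenuation

variable {g : ℝ → ℝ} {a b : ℝ}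

theorem ContinuousOn.continuousOn_primitive_Icc (hab : a ≤ b) (hg : ContinuousOn g (Icc a b)) :
    ContinuousOn (fun t => ∫ s in a..t, g s) (Icc a b) := by
  rw [← uIcc_of_le hab] at hg ⊢
  exact intervalIntegral.continuousOn_primitive_interval hg.integrableOn_uIcc

theorem ContinuousOn.continuousOn_exp_neg_primitive_mul (hab : a ≤ b)
    (hg : ContinuousOn g (Icc a b)) :
    ContinuousOn (fun t => exp (-∫ s in a..t, g s) * g t) (Icc a b) :=
  ((hg.continuousOn_primitive_Icc hab).neg.rexp).mul hg

theorem integral_exp_neg_primitive_mul (hab : a ≤ b) (hg : ContinuousOn g (Icc a b)) :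
    ∫ t in a..b, exp (-∫ s in a..t, g s) * g t = 1 - exp (-∫ s in a..b, g s) := by
  have hderiv : ∀ t ∈ Ioo a b, HasDerivAt (fun t => -exp (-∫ s in a..t, g s))
      (exp (-∫ s in a..t, g s) * g t) t := fun t ht => by
    have hG : HasDerivAt (fun t => ∫ s in a..t, g s) (g t) t :=
      intervalIntegral.integral_hasDerivAt_right
        ((hg.mono (Icc_subset_Icc_right ht.2.le)).intervalIntegrable_of_Icc ht.1.le)
        ((hg.mono Ioo_subset_Icc_self).stronglyMeasurableAtFilter isOpen_Ioo t ht)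
        (hg.continuousAt (Icc_mem_nhds ht.1 ht.2))
    simpa only [Pi.neg_def, mul_neg, neg_neg] using hG.neg.exp.neg
  rw [intervalIntegral.integral_eq_sub_of_hasDerivAt_of_le hab
    (hg.continuousOn_primitive_Icc hab).neg.rexp.neg hderiv
    ((hg.continuousOn_exp_neg_primitive_mul hab).intervalIntegrable_of_Icc hab)]
  simp only [Pi.neg_apply, intervalIntegral.integral_same, neg_zero, exp_zero]
  ring

theorem abs_integral_exp_neg_primitive_mul_mul_le {v : ℝ → ℝ} {M D B : ℝ} (hab : a ≤ b)
    (hbaD : b - a ≤ D) (hg : ContinuousOn g (Icc a b)) (hg₀ : ∀ t ∈ Icc a b, 0 ≤ g t)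
    (hgM : ∀ t ∈ Icc a b, g t ≤ M) (hv : ∀ t ∈ Icc a b, |v t| ≤ B) :
    |∫ t in a..b, exp (-∫ s in a..t, g s) * g t * v t| ≤ (1 - exp (-(M * D))) * B := by
  have hB : 0 ≤ B := (abs_nonneg _).trans (hv a (left_mem_Icc.2 hab))
  have hM : 0 ≤ M := (hg₀ a (left_mem_Icc.2 hab)).trans (hgM a (left_mem_Icc.2 hab))
  have hmass : ∫ s in a..b, g s ≤ M * D :=
    calc ∫ s in a..b, g s ≤ ∫ _ in a..b, M :=
          intervalIntegral.integral_mono_on hab (hg.intervalIntegrable_of_Icc hab)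
            intervalIntegrable_const hgM
      _ = M * (b - a) := by rw [intervalIntegral.integral_const, smul_eq_mul, mul_comm]
      _ ≤ M * D := mul_le_mul_of_nonneg_left hbaD hM
  have hpointwise : ∀ t ∈ Ioc a b, ‖exp (-∫ s in a..t, g s) * g t * v t‖ ≤
      exp (-∫ s in a..t, g s) * g t * B := fun t ht => by
    have hweight : 0 ≤ exp (-∫ s in a..t, g s) * g t :=
      mul_nonneg (exp_pos _).le (hg₀ t (Ioc_subset_Icc_self ht))
    rw [Real.norm_eq_abs, abs_mul, abs_of_nonneg hweight]
    exact mul_le_mul_of_nonneg_left (hv t (Ioc_subset_Icc_self ht)) hweight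
  calc |∫ t in a..b, exp (-∫ s in a..t, g s) * g t * v t|
      ≤ ∫ t in a..b, exp (-∫ s in a..t, g s) * g t * B :=
        intervalIntegral.norm_integral_le_of_norm_le hab (ae_of_all _ hpointwise)
          (ContinuousOn.intervalIntegrable_of_Icc hab
            ((hg.continuousOn_exp_neg_primitive_mul hab).mul continuousOn_const))
    _ = (1 - exp (-∫ s in a..b, g s)) * B := by
        rw [intervalIntegral.integral_mul_const, integral_exp_neg_primitive_mul hab hg]
    _ ≤ (1 - exp (-(M * D))) * B := by gcongr

end Attenuation

theorem K_contraction_general {n : ℕ}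
    (Ω : Set (EuclideanSpace ℝ (Fin n)))
    (σ : EuclideanSpace ℝ (Fin n) → ℝ) (hσ : ContinuousOn σ (closure Ω))
    (c M D : ℝ) (hc : 0 < c)
    (hbd : ∀ y ∈ closure Ω, c ≤ σ y ∧ σ y ≤ M)
    (τ : EuclideanSpace ℝ (Fin n) → EuclideanSpace ℝ (Fin n) → ℝ)
    (hτ : ∀ x θ, 0 ≤ τ x θ ∧ τ x θ ≤ D)
    (μS : Measure (EuclideanSpace ℝ (Fin n)))
    (u : EuclideanSpace ℝ (Fin n) × EuclideanSpace ℝ (Fin n) → ℝ)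
    (B : ℝ) (hub : ∀ z, |u z| ≤ B) :
    ∀ x θ : EuclideanSpace ℝ (Fin n), ‖θ‖ = 1 →
      (∀ s ∈ Set.Icc (0:ℝ) (τ x θ), x - s • θ ∈ closure Ω) →
      |∫ t in (0:ℝ)..(τ x θ),
          Real.exp (-∫ s in (0:ℝ)..t, σ (x - s • θ)) * σ (x - t • θ) *
            (⨍ ω, u (x - t • θ, ω) ∂μS)| ≤ (1 - Real.exp (-(M * D))) * B := by
  intro x θ _ hray
  obtain ⟨hτ₀, hτD⟩ := hτ x θ
  have hσray : ContinuousOn (fun t : ℝ => σ (x - t • θ)) (Icc 0 (τ x θ)) :=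
    hσ.comp (by fun_prop) hray
  have hB : 0 ≤ B := (abs_nonneg _).trans (hub (x, θ))
  refine abs_integral_exp_neg_primitive_mul_mul_le hτ₀ (by linarith) hσray
    (fun t ht => hc.le.trans (hbd _ (hray t ht)).1) (fun t ht => (hbd _ (hray t ht)).2)
    (fun t _ => ?_)
  exact norm_average_le_of_norm_le (f := fun ω => u (x - t • θ, ω)) hB
    (ae_of_all μS fun ω => (Real.norm_eq_abs _).trans_le (hub _))

/-- The scattering operator K is a contraction on L^∞:
|(Ku)(x,θ)| ≤ (1 − e^{−MD})·‖u‖_∞. -/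
theorem K_contraction {n : ℕ}
    (Ω : Set (EuclideanSpace ℝ (Fin n))) (hΩo : IsOpen Ω)
    (hΩb : Bornology.IsBounded Ω)
    (σ : EuclideanSpace ℝ (Fin n) → ℝ) (hσ : ContinuousOn σ (closure Ω))
    (c M D : ℝ) (hc : 0 < c) (hD : 0 ≤ D)
    (hbd : ∀ y ∈ closure Ω, c ≤ σ y ∧ σ y ≤ M)
    (τ : EuclideanSpace ℝ (Fin n) → EuclideanSpace ℝ (Fin n) → ℝ)
    (hτ : ∀ x θ, 0 ≤ τ x θ ∧ τ x θ ≤ D)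
    (μS : Measure (EuclideanSpace ℝ (Fin n))) [IsFiniteMeasure μS]
    (u : EuclideanSpace ℝ (Fin n) × EuclideanSpace ℝ (Fin n) → ℝ)
    (hu : Measurable u) (B : ℝ) (hub : ∀ z, |u z| ≤ B) :
    ∀ x θ : EuclideanSpace ℝ (Fin n), ‖θ‖ = 1 →
      (∀ s ∈ Set.Icc (0:ℝ) (τ x θ), x - s • θ ∈ closure Ω) →
      |∫ t in (0:ℝ)..(τ x θ),
          Real.exp (-∫ s in (0:ℝ)..t, σ (x - s • θ)) * σ (x - t • θ) *
            (⨍ ω, u (x - t • θ, ω) ∂μS)| ≤ (1 - Real.exp (-(M * D))) * B :=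
  K_contraction_general Ω σ hσ c M D hc hbd τ hτ μS u B hub
end
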